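/- arXiv:math/0604467 — 5 statements merged into one kernel-verified Lean document; each statement's English description precedes it below -/
import Mathlib

section
/- Every d-degenerate graph G has a strong ω-decomposition isomorphic to G of width at most d+1. Concretely: G admits an acyclic orientation with all indegrees at most d, and if each vertex v is replaced by the bag {v} ∪ N⁻(v), then every clique of G is contained in some bag, and for every vertex v the set of bags containing v induces a connected subgraph of G. -/
open SimpleGraph

/-- A graph is `d`-degenerate if every nonempty subgraph has a vertex of degree at most `d`. -/
def Degenerate {V : Type*} (d : ℕ) (G : SimpleGraph V) : Prop :=
  ∀ H : G.Subgraph, H.verts.Nonempty → ∃ v ∈ H.verts, (H.neighborSet v).ncard ≤ d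

/-- `o` is an acyclic orientation of `G`: each edge is directed in exactly one way,
and there is no directed cycle. -/
structure IsAcyclicOrientation {V : Type*} (G : SimpleGraph V) (o : V → V → Prop) : Prop where
  orient : ∀ v w, G.Adj v w ↔ (o v w ∨ o w v)
  antisymm : ∀ v w, o v w → ¬ o w v
  acyclic : ∀ v, ¬ Relation.TransGen o v v

/-! Repeatedly deleting a vertex of degree at most `d` ranks the vertices so that each has at
most `d` neighbours of higher rank. Orienting every edge towards its lower-ranked end gives an
acyclic orientation with indegrees at most `d`. A clique lies in the bag of its lowest-ranked
vertex, and the bags containing `v` are those of `v` and its lower-ranked neighbours, a star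
centred at `v`. -/

namespace Degenerate

variable {V : Type*} {G : SimpleGraph V} {d : ℕ}

lemma exists_ncard_neighborSet_inter_le (hG : Degenerate d G) {s : Set V} (hs : s.Nonempty) :
    ∃ v ∈ s, (G.neighborSet v ∩ s).ncard ≤ d := by
  obtain ⟨v, hv, hvd⟩ := hG ((⊤ : G.Subgraph).induce s) hs
  replace hv : v ∈ s := hv
  refine ⟨v, hv, le_of_eq_of_le (congrArg Set.ncard ?_) hvd⟩
  ext w
  simp [hv, and_comm]

lemma exists_rank_injOn (hG : Degenerate d G) (s : Finset V) :
    ∃ f : V → ℕ, Set.InjOn f s ∧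
      ∀ v ∈ s, {w | w ∈ s ∧ G.Adj v w ∧ f v < f w}.ncard ≤ d := by
  classical
  induction s using Finset.strongInduction with
  | _ s ih =>
    rcases s.eq_empty_or_nonempty with rfl | hs
    · exact ⟨fun _ => 0, by simp, by simp⟩
    obtain ⟨v, hv, hvd⟩ := hG.exists_ncard_neighborSet_inter_le (s.coe_nonempty.2 hs)
    obtain ⟨f, hf, hfd⟩ := ih (s.erase v) (Finset.erase_ssubset hv)
    -- `v` gets the lowest rank, so only its at most `d` neighbours in `s` rank above it.
    refine ⟨Function.update (f · + 1) v 0, ?_, ?_⟩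
    · intro a ha b hb hab
      by_cases hav : a = v <;> by_cases hbv : b = v <;> simp [hav, hbv] at hab
      · exact hav.trans hbv.symm
      · exact hf (by simp [hav, ha]) (by simp [hbv, hb]) hab
    · intro w hw
      by_cases hwv : w = v
      · subst hwv
        refine le_trans (Set.ncard_le_ncard ?_ (s.finite_toSet.inter_of_right _)) hvd
        exact fun u hu => ⟨hu.2.1, hu.1⟩
      · refine le_trans (Set.ncard_le_ncard ?_ (Set.toFinite _)) (hfd w (s.mem_erase.2 ⟨hwv, hw⟩))
        rintro u ⟨hu, hwu, hlt⟩
        by_cases huv : u = v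
        · simp [hwv, huv] at hlt
        · simp_all

end Degenerate

namespace SimpleGraph

variable {V α : Type*} [LinearOrder α] (G : SimpleGraph V) (f : V → α)

def rankOrientation (a b : V) : Prop := G.Adj a b ∧ f b < f a

variable {G f}

lemma rankOrientation_lt {a b : V} (h : Relation.TransGen (G.rankOrientation f) a b) :
    f b < f a := by
  induction h with
  | single h => exact h.2
  | tail _ h ih => exact h.2.trans ih

lemma isAcyclicOrientation_rankOrientation (hf : Function.Injective f) :
    IsAcyclicOrientation G (G.rankOrientation f) where
  orient v w := by
    refine ⟨fun h => ?_, by rintro (⟨h, _⟩ | ⟨h, _⟩) <;> first | exact h | exact h.symm⟩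
    rcases lt_or_gt_of_ne (hf.ne h.ne) with hlt | hlt
    · exact Or.inr ⟨h.symm, hlt⟩
    · exact Or.inl ⟨h, hlt⟩
  antisymm _ _ h h' := h.2.asymm h'.2
  acyclic v h := (rankOrientation_lt h).false

lemma setOf_rankOrientation (v : V) :
    {w | G.rankOrientation f w v} = {w | G.Adj v w ∧ f v < f w} := by
  ext w
  simp [rankOrientation, G.adj_comm]

lemma exists_subset_insert_rankOrientation_of_isClique (hf : Function.Injective f) {s : Finset V}
    (hs : s.Nonempty) (hclique : G.IsClique s) :
    ∃ u : V, (s : Set V) ⊆ insert u {w | G.rankOrientation f w u} := by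
  obtain ⟨u, hu, hmin⟩ := s.exists_min_image f hs
  refine ⟨u, fun x hx => (eq_or_ne x u).imp id fun hxu => ⟨(hclique hu hx hxu.symm).symm, ?_⟩⟩
  exact (hmin x hx).lt_of_ne (hf.ne hxu.symm)

lemma connected_induce_bags_rankOrientation (v : V) :
    (G.induce {u | v ∈ insert u {w | G.rankOrientation f w u}}).Connected := by
  have hv : v ∈ {u | v ∈ insert u {w | G.rankOrientation f w u}} := Set.mem_insert v _
  refine (connected_iff_exists_forall_reachable _).2 ⟨⟨v, hv⟩, ?_⟩
  rintro ⟨u, rfl | hu⟩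
  · rfl
  · exact Adj.reachable (show G.Adj v u from hu.1)

end SimpleGraph

/-- Every `d`-degenerate graph `G` has a strong ω-decomposition isomorphic to `G` of width
at most `d+1`: `G` admits an acyclic orientation with all indegrees at most `d`, and
replacing each vertex `v` by the bag `{v} ∪ N⁻(v)` (of size at most `d+1`),
every clique of `G` is contained in some bag, and for every vertex `v` the set of
bags containing `v` induces a connected subgraph of `G`. -/
theorem stmt2 {V : Type*} [Fintype V] (G : SimpleGraph V) (d : ℕ)
    (hdeg : Degenerate d G) :
    ∃ o : V → V → Prop, IsAcyclicOrientation G o ∧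
      (∀ v : V, {w : V | o w v}.ncard ≤ d) ∧
      (∀ v : V, (insert v {w : V | o w v} : Set V).ncard ≤ d + 1) ∧
      (∀ s : Finset V, s.Nonempty → G.IsClique ↑s →
        ∃ u : V, (↑s : Set V) ⊆ insert u {w : V | o w u}) ∧
      (∀ v : V, (G.induce {u : V | v ∈ insert u {w : V | o w u}}).Connected) := by
  obtain ⟨f, hf, hfd⟩ := hdeg.exists_rank_injOn Finset.univ
  replace hf : Function.Injective f := fun a b => hf (by simp) (by simp)
  have hindeg (v : V) : {w | G.rankOrientation f w v}.ncard ≤ d := by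
    simpa [setOf_rankOrientation] using hfd v (Finset.mem_univ v)
  refine ⟨G.rankOrientation f, isAcyclicOrientation_rankOrientation hf, hindeg,
    fun v => (Set.ncard_insert_le _ _).trans (Nat.add_le_add_right (hindeg v) 1),
    fun s hs hclique => exists_subset_insert_rankOrientation_of_isClique hf hs hclique,
    connected_induce_bags_rankOrientation⟩
end

section
/- Contraction Lemma: If D is a decomposition of a graph G of width k and XY is an edge of D, then the graph D' obtained by contracting the edge XY into the single vertex X ∪ Y is again a decomposition of G, of width max{k, |X ∪ Y|}. Moreover, if D is strong then D' is strong, and if D is planar then D' is planar. -/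
open SimpleGraph

/-- `H` is a minor of `G`: there are pairwise disjoint nonempty connected branch sets
in `G`, one for each vertex of `H`, with an edge of `G` between the branch sets of any
two adjacent vertices of `H`. -/
def IsMinor {α β : Type*} (H : SimpleGraph α) (G : SimpleGraph β) : Prop :=
  ∃ f : α → Set β,
    (∀ a, (f a).Nonempty) ∧
    (∀ a, (G.induce (f a)).Connected) ∧
    (Pairwise fun a b => Disjoint (f a) (f b)) ∧
    ∀ a b, H.Adj a b → ∃ u ∈ f a, ∃ v ∈ f b, G.Adj u v

/-- A graph is planar iff it has no `K₅` minor and no `K₃,₃` minor (Wagner's theorem). -/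
def Planar {β : Type*} (G : SimpleGraph β) : Prop :=
  ¬ IsMinor (⊤ : SimpleGraph (Fin 5)) G ∧
  ¬ IsMinor (completeBipartiteGraph (Fin 3) (Fin 3)) G

/-- `D` (a graph on index type `ι`, with bags `X i ⊆ V(G)`) is a decomposition of `G`:
every vertex lies in some bag, the bags containing any fixed vertex induce a connected
subgraph of `D`, and for every edge `vw` of `G` the subgraphs `D(v)` and `D(w)` touch
(share a bag, or a bag containing `v` is adjacent in `D` to a bag containing `w`). -/
structure IsDecomposition {V ι : Type*} (G : SimpleGraph V) (D : SimpleGraph ι)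
    (X : ι → Finset V) : Prop where
  nonempty : ∀ v : V, ∃ i, v ∈ X i
  connected : ∀ v : V, (D.induce {i : ι | v ∈ X i}).Connected
  touch : ∀ ⦃v w : V⦄, G.Adj v w →
    (∃ i, v ∈ X i ∧ w ∈ X i) ∨ (∃ i j, D.Adj i j ∧ v ∈ X i ∧ w ∈ X j)

/-- A strong decomposition: additionally, for every edge `vw` of `G` some bag contains
both `v` and `w`. -/
structure IsStrongDecomposition {V ι : Type*} (G : SimpleGraph V) (D : SimpleGraph ι)
    (X : ι → Finset V) : Prop where
  nonempty : ∀ v : V, ∃ i, v ∈ X i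
  connected : ∀ v : V, (D.induce {i : ι | v ∈ X i}).Connected
  intersect : ∀ ⦃v w : V⦄, G.Adj v w → ∃ i, v ∈ X i ∧ w ∈ X i

lemma reach_map {ι κ : Type*} {A : SimpleGraph ι} {B : SimpleGraph κ} {S : Set ι} {T : Set κ}
    (f : ι → κ) (hf : ∀ i ∈ S, f i ∈ T)
    (he : ∀ i j, (hi : i ∈ S) → (hj : j ∈ S) → A.Adj i j →
      (B.induce T).Reachable ⟨f i, hf i hi⟩ ⟨f j, hf j hj⟩) :
    ∀ (x y : S), (A.induce S).Reachable x y →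
      (B.induce T).Reachable ⟨f x, hf x x.2⟩ ⟨f y, hf y y.2⟩ := by
  intro x y hxy
  obtain ⟨w⟩ := hxy
  induction w with
  | nil => exact Reachable.refl _
  | @cons u v z huv p ih =>
    have h1 : A.Adj u.1 v.1 := huv
    exact (he u.1 v.1 u.2 v.2 h1).trans ih

/-- Contraction Lemma: if `D` is a decomposition of `G` of width `k` and `ab` is an
edge of `D`, then contracting the edge `ab` into the single vertex with bag
`X a ∪ X b` yields again a decomposition of `G`, of width `max k |X a ∪ X b|`;
strongness is preserved, and planarity is preserved. -/
theorem stmt7 {V ι : Type*} [DecidableEq V] [DecidableEq ι] (G : SimpleGraph V)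
    (D : SimpleGraph ι) (X : ι → Finset V) (k : ℕ) (a b : ι) (hab : D.Adj a b)
    (hdec : IsDecomposition G D X) (hw : ∀ i, (X i).card ≤ k) :
    let D' : SimpleGraph {i : ι // i ≠ b} := SimpleGraph.fromRel fun i j =>
      D.Adj i.1 j.1 ∨ (i.1 = a ∧ D.Adj b j.1) ∨ (j.1 = a ∧ D.Adj i.1 b)
    let X' : {i : ι // i ≠ b} → Finset V := fun i =>
      if i.1 = a then X a ∪ X b else X i.1
    IsDecomposition G D' X' ∧
    (∀ i, (X' i).card ≤ max k (X a ∪ X b).card) ∧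
    (IsStrongDecomposition G D X → IsStrongDecomposition G D' X') ∧
    (Planar D → Planar D') := by
  have hne : a ≠ b := hab.ne
  intro D' X'
  -- the projection map
  set π : ι → {i : ι // i ≠ b} := fun i => if h : i = b then ⟨a, hne⟩ else ⟨i, h⟩ with hπ
  have hmem : ∀ i v, v ∈ X i → v ∈ X' (π i) := by
    intro i v hv
    by_cases hib : i = b
    · subst hib
      simp only [hπ, dif_pos rfl, X']
      simp [Finset.mem_union, hv]
    · simp only [hπ, dif_neg hib, X']
      by_cases hia : i = a
      · subst hia; simp [Finset.mem_union, hv]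
      · simp [hia, hv]
  have hsurj : ∀ (i' : {i : ι // i ≠ b}) (v : V), v ∈ X' i' → ∃ m, v ∈ X m ∧ π m = i' := by
    intro i' v hv
    by_cases hia : i'.1 = a
    · simp only [X', if_pos hia, Finset.mem_union] at hv
      rcases hv with hv | hv
      · exact ⟨a, hv, by simp [hπ, dif_neg hne, ← hia]⟩
      · exact ⟨b, hv, by simp only [hπ, dif_pos rfl]; exact Subtype.ext hia.symm⟩
    · simp only [X', if_neg hia] at hv
      exact ⟨i'.1, hv, by simp [hπ, dif_neg i'.2]⟩
  have hπb : ∀ i, i = b → π i = ⟨a, hne⟩ := by intro i hi; simp [hπ, hi]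
  have hπn : ∀ i (h : i ≠ b), π i = ⟨i, h⟩ := by intro i hi; simp [hπ, hi]
  have hadj' : ∀ i j, D.Adj i j → π i = π j ∨ D'.Adj (π i) (π j) := by
    intro i j hij
    by_cases hib : i = b
    · have hjb : j ≠ b := hib ▸ hij.ne'
      rw [hπb i hib, hπn j hjb]
      by_cases hja : j = a
      · exact Or.inl (Subtype.ext hja.symm)
      · refine Or.inr ?_
        rw [SimpleGraph.fromRel_adj]
        refine ⟨fun h => hja (congrArg Subtype.val h).symm,
          Or.inl (Or.inr (Or.inl ⟨rfl, hib ▸ hij⟩))⟩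
    · by_cases hjb : j = b
      · rw [hπn i hib, hπb j hjb]
        by_cases hia : i = a
        · exact Or.inl (Subtype.ext hia)
        · refine Or.inr ?_
          rw [SimpleGraph.fromRel_adj]
          exact ⟨fun h => hia (congrArg Subtype.val h),
            Or.inl (Or.inr (Or.inr ⟨rfl, hjb ▸ hij⟩))⟩
      · rw [hπn i hib, hπn j hjb]
        refine Or.inr ?_
        rw [SimpleGraph.fromRel_adj]
        exact ⟨fun h => hij.ne (congrArg Subtype.val h), Or.inl (Or.inl hij)⟩
  -- connectedness of bags-containing-v subgraphs of D'
  have hconn : ∀ v, (D'.induce {i | v ∈ X' i}).Connected := by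
    intro v
    have hc := hdec.connected v
    have hf : ∀ i ∈ {i : ι | v ∈ X i}, π i ∈ {i | v ∈ X' i} := fun i hi => hmem i v hi
    have he : ∀ i j, (hi : i ∈ {i : ι | v ∈ X i}) → (hj : j ∈ {i : ι | v ∈ X i}) → D.Adj i j →
        (D'.induce {i | v ∈ X' i}).Reachable ⟨π i, hf i hi⟩ ⟨π j, hf j hj⟩ := by
      intro i j hi hj hij
      rcases hadj' i j hij with h | h
      · have : (⟨π i, hf i hi⟩ : {i // i ∈ {i | v ∈ X' i}}) = ⟨π j, hf j hj⟩ := Subtype.ext h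
        rw [this]
      · exact SimpleGraph.Adj.reachable h
    rw [connected_iff]
    constructor
    · intro x y
      obtain ⟨mx, hmx, hπx⟩ := hsurj x.1 v x.2
      obtain ⟨my, hmy, hπy⟩ := hsurj y.1 v y.2
      have := reach_map π hf he ⟨mx, hmx⟩ ⟨my, hmy⟩ (hc.preconnected _ _)
      have ex : (⟨π mx, hf mx hmx⟩ : {i // i ∈ {i | v ∈ X' i}}) = x := Subtype.ext hπx
      have ey : (⟨π my, hf my hmy⟩ : {i // i ∈ {i | v ∈ X' i}}) = y := Subtype.ext hπy
      rwa [ex, ey] at this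
    · obtain ⟨i, hi⟩ := hdec.nonempty v
      exact ⟨⟨π i, hmem i v hi⟩⟩
  refine ⟨?_, ?_, ?_, ?_⟩
  · -- decomposition
    refine ⟨fun v => ?_, hconn, fun v w hvw => ?_⟩
    · obtain ⟨i, hi⟩ := hdec.nonempty v
      exact ⟨π i, hmem i v hi⟩
    · rcases hdec.touch hvw with ⟨i, hvi, hwi⟩ | ⟨i, j, hij, hvi, hwj⟩
      · exact Or.inl ⟨π i, hmem i v hvi, hmem i w hwi⟩
      · rcases hadj' i j hij with h | h
        · exact Or.inl ⟨π i, hmem i v hvi, h ▸ hmem j w hwj⟩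
        · exact Or.inr ⟨π i, π j, h, hmem i v hvi, hmem j w hwj⟩
  · -- width
    intro i
    by_cases hia : i.1 = a
    · simp only [X', if_pos hia]
      exact le_max_right _ _
    · simp only [X', if_neg hia]
      exact le_trans (hw i.1) (le_max_left _ _)
  · -- strong
    intro hs
    refine ⟨fun v => ?_, hconn, fun v w hvw => ?_⟩
    · obtain ⟨i, hi⟩ := hdec.nonempty v
      exact ⟨π i, hmem i v hi⟩
    · obtain ⟨i, hvi, hwi⟩ := hs.intersect hvw
      exact ⟨π i, hmem i v hvi, hmem i w hwi⟩
  · -- planarity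
    have key : ∀ {α : Type} (H : SimpleGraph α), IsMinor H D' → IsMinor H D := by
      rintro α H ⟨f, hne', hconn', hdisj', hedge'⟩
      classical
      set g : α → Set ι := fun c => (Subtype.val '' f c) ∪ {i | i = b ∧ (⟨a, hne⟩ : {i : ι // i ≠ b}) ∈ f c} with hg
      have hmemg : ∀ c (x : {i : ι // i ≠ b}), x ∈ f c → x.1 ∈ g c := by
        intro c x hx; exact Or.inl ⟨x, hx, rfl⟩
      have hbg : ∀ c, (⟨a, hne⟩ : {i : ι // i ≠ b}) ∈ f c → b ∈ g c := by
        intro c hc; exact Or.inr ⟨rfl, hc⟩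
      refine ⟨g, fun c => ?_, fun c => ?_, ?_, ?_⟩
      · obtain ⟨x, hx⟩ := hne' c
        exact ⟨x.1, hmemg c x hx⟩
      · -- connectedness of g c
        have hf : ∀ x ∈ f c, (Subtype.val x : ι) ∈ g c := fun x hx => hmemg c x hx
        have he : ∀ x y, (hx : x ∈ f c) → (hy : y ∈ f c) → D'.Adj x y →
            (D.induce (g c)).Reachable ⟨x.1, hf x hx⟩ ⟨y.1, hf y hy⟩ := by
          intro x y hx hy hxy
          rw [SimpleGraph.fromRel_adj] at hxy
          obtain ⟨hxyne, hr⟩ := hxy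
          have step : ∀ (u w : {i : ι // i ≠ b}) (hu : u ∈ f c) (hw : w ∈ f c), u.1 = a → D.Adj b w.1 →
              (D.induce (g c)).Reachable ⟨u.1, hf u hu⟩ ⟨w.1, hf w hw⟩ := by
            intro u w hu hw hua hbw
            have hua' : u = ⟨a, hne⟩ := Subtype.ext hua
            have hb : b ∈ g c := hbg c (hua' ▸ hu)
            have r1 : (D.induce (g c)).Adj ⟨u.1, hf u hu⟩ ⟨b, hb⟩ := by
              show D.Adj u.1 b; rw [hua]; exact hab
            have r2 : (D.induce (g c)).Adj ⟨b, hb⟩ ⟨w.1, hf w hw⟩ := by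
              show D.Adj b w.1; exact hbw
            exact (r1.reachable).trans r2.reachable
          rcases hr with (h | ⟨h1, h2⟩ | ⟨h1, h2⟩) | (h | ⟨h1, h2⟩ | ⟨h1, h2⟩)
          · exact SimpleGraph.Adj.reachable (by show D.Adj x.1 y.1; exact h)
          · exact step x y hx hy h1 h2
          · exact (step y x hy hx h1 (h2.symm)).symm
          · exact SimpleGraph.Adj.reachable (by show D.Adj x.1 y.1; exact h.symm)
          · exact (step y x hy hx h1 h2).symm
          · exact step x y hx hy h1 h2.symm
        have hrep : ∀ u : {i // i ∈ g c}, ∃ (x : {i : ι // i ≠ b}) (hx : x ∈ f c),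
            (D.induce (g c)).Reachable u ⟨x.1, hf x hx⟩ := by
          intro u
          rcases u.2 with ⟨x, hx, hxu⟩ | ⟨hub, hac⟩
          · refine ⟨x, hx, ?_⟩
            have : u = ⟨x.1, hf x hx⟩ := Subtype.ext hxu.symm
            rw [this]
          · refine ⟨⟨a, hne⟩, hac, ?_⟩
            have : (D.induce (g c)).Adj u ⟨a, hf _ hac⟩ := by
              show D.Adj u.1 a; rw [hub]; exact hab.symm
            exact this.reachable
        rw [connected_iff]
        constructor
        · intro u v
          obtain ⟨x, hx, hux⟩ := hrep u
          obtain ⟨y, hy, hvy⟩ := hrep v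
          have := reach_map Subtype.val hf he ⟨x, hx⟩ ⟨y, hy⟩ ((hconn' c).preconnected _ _)
          exact (hux.trans this).trans hvy.symm
        · obtain ⟨x, hx⟩ := hne' c
          exact ⟨⟨x.1, hf x hx⟩⟩
      · -- pairwise disjoint
        intro c c' hcc'
        rw [Set.disjoint_left]
        rintro i (⟨x, hx, hxi⟩ | ⟨hib, hac⟩) (⟨y, hy, hyi⟩ | ⟨hib', hac'⟩)
        · have : x = y := Subtype.ext (hxi.trans hyi.symm)
          exact Set.disjoint_left.mp (hdisj' hcc') hx (this ▸ hy)
        · exact x.2 (hxi.trans hib')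
        · exact y.2 (hyi.trans hib)
        · exact Set.disjoint_left.mp (hdisj' hcc') hac hac'
      · -- edges
        intro c c' hcc'
        obtain ⟨u, hu, v, hv, huv⟩ := hedge' c c' hcc'
        rw [SimpleGraph.fromRel_adj] at huv
        obtain ⟨huvne, hr⟩ := huv
        rcases hr with (h | ⟨h1, h2⟩ | ⟨h1, h2⟩) | (h | ⟨h1, h2⟩ | ⟨h1, h2⟩)
        · exact ⟨u.1, hmemg c u hu, v.1, hmemg c' v hv, h⟩
        · have : u = ⟨a, hne⟩ := Subtype.ext h1
          exact ⟨b, hbg c (this ▸ hu), v.1, hmemg c' v hv, h2⟩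
        · have : v = ⟨a, hne⟩ := Subtype.ext h1
          exact ⟨u.1, hmemg c u hu, b, hbg c' (this ▸ hv), h2⟩
        · exact ⟨u.1, hmemg c u hu, v.1, hmemg c' v hv, h.symm⟩
        · have : v = ⟨a, hne⟩ := Subtype.ext h1
          exact ⟨u.1, hmemg c u hu, b, hbg c' (this ▸ hv), h2.symm⟩
        · have : u = ⟨a, hne⟩ := Subtype.ext h1
          exact ⟨b, hbg c (this ▸ hu), v.1, hmemg c' v hv, h2.symm⟩
    rintro ⟨h5, h33⟩
    exact ⟨fun h => h5 (key _ h), fun h => h33 (key _ h)⟩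
end

section
/- Composition Lemma: If D is a decomposition of a graph G with width k, and J is a decomposition of the graph D with width ℓ, then G has a decomposition isomorphic to J with width at most k·ℓ. Namely, replacing each bag Y of J by Y' = {v ∈ V(G) : v ∈ X for some X ∈ Y} yields a decomposition of G. Moreover, if D is strong then the resulting decomposition is strong. -/
open SimpleGraph

private def inclHom {κ : Type*} (J : SimpleGraph κ) {T' T : Set κ} (h : T' ⊆ T) :
    J.induce T' →g J.induce T where
  toFun := Set.inclusion h
  map_rel' := fun hadj => hadj

private lemma reach_of_subset {κ : Type*} (J : SimpleGraph κ) {T' T : Set κ} (h : T' ⊆ T)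
    {a b : κ} (ha : a ∈ T') (hb : b ∈ T')
    (hr : (J.induce T').Reachable ⟨a, ha⟩ ⟨b, hb⟩) :
    (J.induce T).Reachable ⟨a, h ha⟩ ⟨b, h hb⟩ :=
  hr.map (inclHom J h)

private lemma key {ι κ : Type*} {D : SimpleGraph ι} {J : SimpleGraph κ} {Y : κ → Finset ι}
    (hJ : IsDecomposition D J Y) (S : Set ι) (T : Set κ)
    (hT : ∀ {i : ι}, i ∈ S → ∀ {c : κ}, i ∈ Y c → c ∈ T)
    {a b : S} (p : (D.induce S).Walk a b) :
    ∀ c c' (hc : (a : ι) ∈ Y c) (hc' : (b : ι) ∈ Y c'),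
      (J.induce T).Reachable ⟨c, hT a.2 hc⟩ ⟨c', hT b.2 hc'⟩ := by
  induction p with
  | @nil u =>
    intro c c' hc hc'
    have hsub : {d : κ | (u : ι) ∈ Y d} ⊆ T := fun d hd => hT u.2 hd
    have := (hJ.connected (u : ι)).preconnected ⟨c, hc⟩ ⟨c', hc'⟩
    exact reach_of_subset J hsub hc hc' this
  | @cons a a₁ b hadj p ih =>
    intro c c' hc hc'
    have hDadj : D.Adj (a : ι) (a₁ : ι) := hadj
    rcases hJ.touch hDadj with ⟨c₀, h1, h2⟩ | ⟨c₁, c₂, hJadj, h1, h2⟩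
    · have step1 : (J.induce T).Reachable ⟨c, hT a.2 hc⟩ ⟨c₀, hT a.2 h1⟩ := by
        have hsub : {d : κ | (a : ι) ∈ Y d} ⊆ T := fun d hd => hT a.2 hd
        exact reach_of_subset J hsub hc h1 ((hJ.connected (a : ι)).preconnected ⟨c, hc⟩ ⟨c₀, h1⟩)
      exact step1.trans (ih c₀ c' h2 hc')
    · have step1 : (J.induce T).Reachable ⟨c, hT a.2 hc⟩ ⟨c₁, hT a.2 h1⟩ := by
        have hsub : {d : κ | (a : ι) ∈ Y d} ⊆ T := fun d hd => hT a.2 hd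
        exact reach_of_subset J hsub hc h1 ((hJ.connected (a : ι)).preconnected ⟨c, hc⟩ ⟨c₁, h1⟩)
      have step2 : (J.induce T).Adj ⟨c₁, hT a.2 h1⟩ ⟨c₂, hT a₁.2 h2⟩ := hJadj
      exact (step1.trans step2.reachable).trans (ih c₂ c' h2 hc')

/-- Composition Lemma: if `D` is a decomposition of `G` with width `k`, and `J` is a
decomposition of the graph `D` with width `ℓ`, then replacing each bag `Y c` of `J` by
`Y' c = {v ∈ V(G) : v ∈ X i for some i ∈ Y c}` yields a decomposition of `G`
isomorphic to `J` of width at most `k·ℓ`; moreover if `D` is a strong decomposition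
then so is the resulting one. -/
theorem stmt8 {V ι κ : Type*} [DecidableEq V] (G : SimpleGraph V)
    (D : SimpleGraph ι) (X : ι → Finset V) (J : SimpleGraph κ) (Y : κ → Finset ι)
    (k l : ℕ)
    (hD : IsDecomposition G D X) (hk : ∀ i, (X i).card ≤ k)
    (hJ : IsDecomposition D J Y) (hl : ∀ c, (Y c).card ≤ l) :
    let Y' : κ → Finset V := fun c => (Y c).biUnion X
    IsDecomposition G J Y' ∧
    (∀ c, (Y' c).card ≤ k * l) ∧
    (IsStrongDecomposition G D X → IsStrongDecomposition G J Y') := by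
  
  intro Y'
  have mem' : ∀ {v c}, v ∈ Y' c ↔ ∃ i ∈ Y c, v ∈ X i := by
    intro v c; simp [Y', Finset.mem_biUnion]
  have hnon : ∀ v : V, ∃ c, v ∈ Y' c := by
    intro v
    obtain ⟨i, hi⟩ := hD.nonempty v
    obtain ⟨c, hc⟩ := hJ.nonempty i
    exact ⟨c, mem'.2 ⟨i, hc, hi⟩⟩
  have hconn : ∀ v : V, (J.induce {c : κ | v ∈ Y' c}).Connected := by
    intro v
    obtain ⟨c₀, hc₀⟩ := hnon v
    haveI hne : Nonempty {c : κ | v ∈ Y' c} := ⟨⟨c₀, hc₀⟩⟩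
    refine SimpleGraph.Connected.mk ?_
    rintro ⟨c, hc⟩ ⟨c', hc'⟩
    obtain ⟨i, hiY, hiX⟩ := mem'.1 hc
    obtain ⟨i', hiY', hiX'⟩ := mem'.1 hc'
    set S : Set ι := {j : ι | v ∈ X j}
    have hT : ∀ {j : ι}, j ∈ S → ∀ {d : κ}, j ∈ Y d → d ∈ {c : κ | v ∈ Y' c} := by
      intro j hj d hd
      exact mem'.2 ⟨j, hd, hj⟩
    obtain ⟨p⟩ := (hD.connected v).preconnected ⟨i, hiX⟩ ⟨i', hiX'⟩
    exact key hJ S _ hT p c c' hiY hiY'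
  have htouch : ∀ ⦃v w : V⦄, G.Adj v w →
      (∃ c, v ∈ Y' c ∧ w ∈ Y' c) ∨ (∃ c d, J.Adj c d ∧ v ∈ Y' c ∧ w ∈ Y' d) := by
    intro v w hvw
    rcases hD.touch hvw with ⟨i, hvi, hwi⟩ | ⟨i, j, hij, hvi, hwj⟩
    · obtain ⟨c, hc⟩ := hJ.nonempty i
      exact Or.inl ⟨c, mem'.2 ⟨i, hc, hvi⟩, mem'.2 ⟨i, hc, hwi⟩⟩
    · rcases hJ.touch hij with ⟨c, h1, h2⟩ | ⟨c, d, hcd, h1, h2⟩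
      · exact Or.inl ⟨c, mem'.2 ⟨i, h1, hvi⟩, mem'.2 ⟨j, h2, hwj⟩⟩
      · exact Or.inr ⟨c, d, hcd, mem'.2 ⟨i, h1, hvi⟩, mem'.2 ⟨j, h2, hwj⟩⟩
  refine ⟨⟨hnon, hconn, htouch⟩, ?_, ?_⟩
  · intro c
    calc (Y' c).card ≤ ∑ i ∈ Y c, (X i).card := Finset.card_biUnion_le
      _ ≤ (Y c).card * k := by
          simpa using Finset.sum_le_card_nsmul (Y c) (fun i => (X i).card) k (fun i _ => hk i)
      _ ≤ l * k := Nat.mul_le_mul_right k (hl c)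
      _ = k * l := Nat.mul_comm l k
  · intro hS
    refine ⟨hnon, hconn, ?_⟩
    intro v w hvw
    obtain ⟨i, hvi, hwi⟩ := hS.intersect hvw
    obtain ⟨c, hc⟩ := hJ.nonempty i
    exact ⟨c, mem'.2 ⟨i, hc, hvi⟩, mem'.2 ⟨i, hc, hwi⟩⟩
end

section
/- If a graph G (with no isolated vertices) has a drawing in the plane with c crossings, then G has a planar decomposition of width 2 and order at most |V(G)| + c. Concretely, the planar graph obtained from the drawing by replacing each vertex v with the bag {v} and each crossing between edges vw and xy with a degree-4 vertex with bag {v,x} (choosing for each edge one endpoint of each crossed pair consistently along the edge) is a planar decomposition of G of width 2. -/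
open SimpleGraph

universe u

/-- A combinatorial model of a drawing of `G` in the plane with `c` crossings: a planar
planarization graph `P` on the vertices of `G` together with `c` crossing points, in
which each edge `vw` of `G` is routed as a walk from `v` to `w` whose interior passes
only through crossing points, and each crossing point lies on the routes of exactly two
distinct edges of `G`. -/
def HasDrawingWithCrossings {V : Type u} (G : SimpleGraph V) (c : ℕ) : Prop :=
  ∃ (P : SimpleGraph (V ⊕ Fin c))
    (route : ∀ ⦃v w : V⦄, G.Adj v w → P.Walk (Sum.inl v) (Sum.inl w)),
    Planar P ∧
    (∀ ⦃v w : V⦄ (h : G.Adj v w) (x : V),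
      Sum.inl x ∈ (route h).support → x = v ∨ x = w) ∧
    (∀ k : Fin c, ∃ (v w x y : V) (h₁ : G.Adj v w) (h₂ : G.Adj x y),
      s(v, w) ≠ s(x, y) ∧
      Sum.inr k ∈ (route h₁).support ∧ Sum.inr k ∈ (route h₂).support ∧
      ∀ ⦃a b : V⦄ (h : G.Adj a b),
        Sum.inr k ∈ (route h).support → s(a, b) = s(v, w) ∨ s(a, b) = s(x, y))

/-! The planarization of the drawing is itself the decomposition. Fix a linear order on `V`; a
vertex `v` gets the bag `{v}`, and a crossing gets the lower endpoints of the (two) edges whose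
routes pass through it. The bags containing `v` are `{v}` and crossings on routes of edges with
lower end `v`; each of these is joined to `v` by the initial segment of its route, so they induce
a connected subgraph. An edge `ab` with `a < b` is touched by the last step of its route, which
enters `{b}` from a bag containing `a`. The order is `|V| + c` by construction. -/

namespace Planarization

variable {V K : Type*} {G : SimpleGraph V} {P : SimpleGraph (V ⊕ K)}
  [LinearOrder V] [DecidableEq K]
  (route : ∀ ⦃v w : V⦄, G.Adj v w → P.Walk (.inl v) (.inl w))

def AvoidsOtherVertices : Prop :=
  ∀ ⦃v w : V⦄ (h : G.Adj v w) (x : V), .inl x ∈ (route h).support → x = v ∨ x = w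

/- Routes are shortened to paths (`bypass`) so that the part of a route before a crossing never
reaches the upper endpoint. -/
def lowerEndsThrough (k : K) : Set V :=
  {u | ∃ w, ∃ h : G.Adj u w, u < w ∧ .inr k ∈ (route h).bypass.support}

noncomputable def bag [Finite V] : V ⊕ K → Finset V
  | .inl v => {v}
  | .inr k => (Set.toFinite (lowerEndsThrough route k)).toFinset

variable [Finite V]

@[simp]
lemma bag_inl (v : V) : bag route (.inl v) = {v} := rfl

@[simp]
lemma mem_bag_inr {u : V} {k : K} : u ∈ bag route (.inr k) ↔ u ∈ lowerEndsThrough route k :=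
  Set.Finite.mem_toFinset _

variable {route}

lemma mem_bag_of_mem_support_bypass
    (hint : AvoidsOtherVertices route)
    {a b : V} (h : G.Adj a b) (hab : a < b) {z : V ⊕ K}
    (hz : z ∈ (route h).bypass.support) (hzb : z ≠ .inl b) : a ∈ bag route z := by
  cases z with
  | inl x =>
    obtain rfl | rfl := hint h x ((route h).support_bypass_subset_support hz)
    · simp
    · exact absurd rfl hzb
  | inr k => exact mem_bag_inr route |>.2 ⟨b, h, hab, hz⟩

lemma induce_bag_connected
    (hint : AvoidsOtherVertices route)
    (v : V) : (P.induce {i | v ∈ bag route i}).Connected := by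
  refine P.induce_connected_of_patches (.inl v) (by simp) fun {i} hi => ⟨_, le_rfl, by simp, hi, ?_⟩
  cases i with
  | inl x =>
    obtain rfl : v = x := by simpa using hi
    rfl
  | inr k =>
    obtain ⟨w, h, hvw, hk⟩ := (mem_bag_inr route).1 hi
    set q := (route h).bypass
    have hsub : ∀ z ∈ (q.takeUntil _ hk).support, v ∈ bag route z := fun z hz =>
      mem_bag_of_mem_support_bypass hint h hvw (q.support_takeUntil_subset_support hk hz)
        (ne_of_mem_of_not_mem hz
          (q.endpoint_notMem_support_takeUntil (route h).bypass_isPath hk (by simp)))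
    exact ⟨(q.takeUntil _ hk).induce _ hsub⟩

lemma exists_adj_bags_of_lt
    (hint : AvoidsOtherVertices route)
    {a b : V} (h : G.Adj a b) (hab : a < b) :
    ∃ i j, P.Adj i j ∧ a ∈ bag route i ∧ b ∈ bag route j := by
  set q := (route h).bypass
  have hq : ¬ q.Nil := Walk.not_nil_of_ne (by simpa using h.ne)
  refine ⟨q.penultimate, .inl b, q.adj_penultimate hq, ?_, by simp⟩
  exact mem_bag_of_mem_support_bypass hint h hab
    (List.mem_of_mem_dropLast (q.penultimate_mem_dropLast_support hq)) (q.adj_penultimate hq).ne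

theorem isDecomposition
    (hint : AvoidsOtherVertices route) :
    IsDecomposition G P (bag route) where
  nonempty v := ⟨.inl v, by simp⟩
  connected := induce_bag_connected hint
  touch v w h := by
    right
    rcases h.ne.lt_or_gt with hvw | hwv
    · exact exists_adj_bags_of_lt hint h hvw
    · obtain ⟨i, j, hij, hw, hv⟩ := exists_adj_bags_of_lt hint h.symm hwv
      exact ⟨j, i, hij.symm, hv, hw⟩

lemma card_bag_inr_le_two {k : K} {e₁ e₂ : Sym2 V}
    (hk : ∀ ⦃a b : V⦄ (h : G.Adj a b), .inr k ∈ (route h).support → s(a, b) = e₁ ∨ s(a, b) = e₂) :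
    (bag route (.inr k)).card ≤ 2 := by
  have hsub : bag route (.inr k) ⊆ {e₁.inf, e₂.inf} := fun u hu => by
    obtain ⟨w, h, huw, hkw⟩ := (mem_bag_inr route).1 hu
    have hu : s(u, w).inf = u := by simp [huw.le]
    rcases hk h ((route h).support_bypass_subset_support hkw) with he | he <;>
      rw [← hu, he] <;> simp
  exact (Finset.card_le_card hsub).trans Finset.card_le_two

end Planarization

theorem stmt10_general {V : Type u} [Fintype V] (G : SimpleGraph V) (c : ℕ)
    (hdraw : HasDrawingWithCrossings G c) :
    ∃ (ι : Type u) (D : SimpleGraph ι) (X : ι → Finset V),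
      IsDecomposition G D X ∧ Planar D ∧
      (∀ i, (X i).card ≤ 2) ∧
      Nat.card ι ≤ Fintype.card V + c := by
  let : LinearOrder V := IsWellOrder.linearOrder WellOrderingRel
  obtain ⟨P, route, hP, hint, hcross⟩ := hdraw
  refine ⟨V ⊕ Fin c, P, Planarization.bag route, Planarization.isDecomposition hint, hP, ?_, ?_⟩
  · rintro (v | k)
    · simp
    · obtain ⟨v, w, x, y, -, -, -, -, -, hk⟩ := hcross k
      exact Planarization.card_bag_inr_le_two hk
  · simp

/-- If a graph `G` with no isolated vertices has a drawing in the plane with `c`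
crossings, then `G` has a planar decomposition of width 2 and order at most
`|V(G)| + c`. -/
theorem stmt10 {V : Type u} [Fintype V] (G : SimpleGraph V) (c : ℕ)
    (hiso : ∀ v : V, ∃ w, G.Adj v w)
    (hdraw : HasDrawingWithCrossings G c) :
    ∃ (ι : Type u) (D : SimpleGraph ι) (X : ι → Finset V),
      IsDecomposition G D X ∧ Planar D ∧
      (∀ i, (X i).card ≤ 2) ∧
      Nat.card ι ≤ Fintype.card V + c :=
  stmt10_general G c hdraw
end

section
/- Wagner's K₃,₃ theorem (edge count consequence): every K₃,₃-minor-free graph G with at least 3 vertices has at most 3|V(G)| − 5 edges. -/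
open SimpleGraph

namespace Wagner

variable {V : Type*}

/-- spanning subgraph keeping only edges inside `t` -/
def restrict (G : SimpleGraph V) (t : Set V) : SimpleGraph V where
  Adj u v := G.Adj u v ∧ u ∈ t ∧ v ∈ t
  symm := ⟨fun u v h => ⟨h.1.symm, h.2.2, h.2.1⟩⟩
  loopless := ⟨fun v h => G.irrefl h.1⟩

lemma restrict_le (G : SimpleGraph V) (t : Set V) : restrict G t ≤ G := fun _ _ h => h.1

lemma isMinor_mono {α : Type*} {H : SimpleGraph α} {G G' : SimpleGraph V} (hle : G ≤ G')
    (h : IsMinor H G) : IsMinor H G' := by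
  obtain ⟨f, h1, h2, h3, h4⟩ := h
  exact ⟨f, h1, fun a => (h2 a).mono (fun u v huv => hle huv),
    h3, fun a b hab => by
      obtain ⟨u, hu, v, hv, huv⟩ := h4 a b hab
      exact ⟨u, hu, v, hv, hle huv⟩⟩

lemma singleton_connected (G : SimpleGraph V) (v : V) : (G.induce {v}).Connected := by
  have : Nonempty ({v} : Set V) := ⟨⟨v, rfl⟩⟩
  exact ⟨fun a b => by
    have : a = b := Subtype.ext (by rw [a.2, b.2])
    exact this ▸ Reachable.refl _⟩

lemma reachable_closure {G1 : SimpleGraph V} {t : Set V}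
    (hcl : ∀ p q, G1.Adj p q → p ∈ t → q ∈ t) {u w : V} (r : G1.Reachable u w)
    (hu : u ∈ t) : w ∈ t := by
  obtain ⟨p⟩ := r
  induction p with
  | nil => exact hu
  | cons h p ih => exact ih (hcl _ _ h hu)

lemma reach_induce_transfer {G1 G2 : SimpleGraph V} {t : Set V}
    (h : ∀ p q, G1.Adj p q → p ∈ t → q ∈ t ∧ G2.Adj p q)
    {u w : V} (r : G1.Reachable u w) (hu : u ∈ t) :
    ∃ hw : w ∈ t, (G2.induce t).Reachable ⟨u, hu⟩ ⟨w, hw⟩ := by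
  obtain ⟨p⟩ := r
  induction p with
  | nil => exact ⟨hu, Reachable.refl _⟩
  | @cons a b c hab p ih =>
    obtain ⟨hb, hadj⟩ := h _ _ hab hu
    obtain ⟨hw, hr⟩ := ih hb
    refine ⟨hw, Reachable.trans ?_ hr⟩
    exact Adj.reachable (by exact hadj)

lemma reach_induce_induce {G1 G2 : SimpleGraph V} {t1 t2 : Set V} (hsub : t1 ⊆ t2)
    (hadj : ∀ p q (hp : p ∈ t1) (hq : q ∈ t1), G1.Adj p q →
      (G2.induce t2).Reachable ⟨p, hsub hp⟩ ⟨q, hsub hq⟩)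
    {u w : ↥t1} (r : (G1.induce t1).Reachable u w) :
    (G2.induce t2).Reachable ⟨u.1, hsub u.2⟩ ⟨w.1, hsub w.2⟩ := by
  obtain ⟨p⟩ := r
  induction p with
  | nil => exact Reachable.refl _
  | @cons a b c hab p ih =>
    exact Reachable.trans (hadj a.1 b.1 a.2 b.2 hab) ih

lemma isMinor_K33_of (G : SimpleGraph V) (L R : Fin 3 → Set V)
    (hLne : ∀ i, (L i).Nonempty) (hRne : ∀ i, (R i).Nonempty)
    (hLconn : ∀ i, (G.induce (L i)).Connected) (hRconn : ∀ i, (G.induce (R i)).Connected)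
    (hLL : ∀ i j, i ≠ j → Disjoint (L i) (L j))
    (hRR : ∀ i j, i ≠ j → Disjoint (R i) (R j))
    (hLR : ∀ i j, Disjoint (L i) (R j))
    (hadj : ∀ i j, ∃ u ∈ L i, ∃ v ∈ R j, G.Adj u v) :
    IsMinor (completeBipartiteGraph (Fin 3) (Fin 3)) G := by
  refine ⟨Sum.elim L R, ?_, ?_, ?_, ?_⟩
  · rintro (i | i)
    · exact hLne i
    · exact hRne i
  · rintro (i | i)
    · exact hLconn i
    · exact hRconn i
  · rintro (i | i) (j | j) hne
    · exact hLL i j (fun h => hne (by rw [h]))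
    · exact hLR i j
    · exact (hLR j i).symm
    · exact hRR i j (fun h => hne (by rw [h]))
  · rintro (i | i) (j | j) hab <;> simp only [completeBipartiteGraph_adj] at hab <;>
      try simp at hab
    · obtain ⟨u, hu, v, hv, huv⟩ := hadj i j
      exact ⟨u, hu, v, hv, huv⟩
    · obtain ⟨u, hu, v, hv, huv⟩ := hadj j i
      exact ⟨v, hv, u, hu, huv.symm⟩

lemma isMinor_K33_of_adj (G : SimpleGraph V) (xs ys : Fin 3 → V)
    (hxs : ∀ i j, i ≠ j → xs i ≠ xs j) (hys : ∀ i j, i ≠ j → ys i ≠ ys j)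
    (h : ∀ i j, G.Adj (xs i) (ys j)) :
    IsMinor (completeBipartiteGraph (Fin 3) (Fin 3)) G := by
  refine isMinor_K33_of G (fun i => {xs i}) (fun j => {ys j})
    (fun i => ⟨xs i, rfl⟩) (fun j => ⟨ys j, rfl⟩)
    (fun i => singleton_connected G (xs i)) (fun j => singleton_connected G (ys j))
    (fun i j hij => Set.disjoint_singleton.2 (hxs i j hij))
    (fun i j hij => Set.disjoint_singleton.2 (hys i j hij))
    (fun i j => Set.disjoint_singleton.2 (h i j).ne)
    (fun i j => ⟨xs i, rfl, ys j, rfl, h i j⟩)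

/-- contract the edge `x-y`, relocating `x`'s edges to `y` and isolating `x`. -/
def contract (G : SimpleGraph V) (x y : V) : SimpleGraph V where
  Adj u v := u ≠ v ∧ u ≠ x ∧ v ≠ x ∧
    (G.Adj u v ∨ (u = y ∧ G.Adj x v) ∨ (v = y ∧ G.Adj x u))
  symm := ⟨fun u v h => ⟨h.1.symm, h.2.2.1, h.2.1, by
    rcases h.2.2.2 with h' | h' | h'
    · exact Or.inl h'.symm
    · exact Or.inr (Or.inr h')
    · exact Or.inr (Or.inl h')⟩⟩
  loopless := ⟨fun v h => h.1 rfl⟩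

lemma contract_isMinor {x y : V} {G : SimpleGraph V} (hxy : G.Adj x y)
    (h : IsMinor (completeBipartiteGraph (Fin 3) (Fin 3)) (contract G x y)) :
    IsMinor (completeBipartiteGraph (Fin 3) (Fin 3)) G := by
  classical
  obtain ⟨f, h1, h2, h3, h4⟩ := h
  set Gc := contract G x y with hGc
  -- x is in no branch set
  have hxnot : ∀ a, x ∉ f a := by
    intro a hxa
    -- find a K33-neighbour of a
    obtain ⟨b, hab⟩ : ∃ b, (completeBipartiteGraph (Fin 3) (Fin 3)).Adj a b := by
      rcases a with i | i
      · exact ⟨Sum.inr 0, by simp⟩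
      · exact ⟨Sum.inl 0, by simp⟩
    obtain ⟨u, hu, v, hv, huv⟩ := h4 a b hab
    have hux : u ≠ x := huv.2.1
    -- x and u are in the same branch set, connected, so there is an edge at x in Gc
    have hreach := (h2 a).preconnected ⟨x, hxa⟩ ⟨u, hu⟩
    obtain ⟨p⟩ := hreach
    have key : ∀ (w : ↥(f a)) (p : (Gc.induce (f a)).Walk ⟨x, hxa⟩ w), w.1 ≠ x → False := by
      intro w p
      cases p with
      | nil => intro h; exact h rfl
      | cons hadj _ => intro _; exact hadj.2.1 rfl
    exact key ⟨u, hu⟩ p hux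
  -- new branch sets
  set f' : Fin 3 ⊕ Fin 3 → Set V := fun a => f a ∪ {w : V | w = x ∧ y ∈ f a} with hf'
  have hsub : ∀ a, f a ⊆ f' a := fun a => Set.subset_union_left
  have hmemx : ∀ a, y ∈ f a → x ∈ f' a := fun a hy => Or.inr ⟨rfl, hy⟩
  have hmem' : ∀ a z, z ∈ f' a → z ∈ f a ∨ (z = x ∧ y ∈ f a) := fun a z hz => hz
  refine ⟨f', fun a => (h1 a).mono (hsub a), ?_, ?_, ?_⟩
  · -- connectivity
    intro a
    have key : ∀ p q (hp : p ∈ f a) (hq : q ∈ f a), Gc.Adj p q →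
        (G.induce (f' a)).Reachable ⟨p, hsub a hp⟩ ⟨q, hsub a hq⟩ := by
      intro p q hp hq hpq
      rcases hpq.2.2.2 with h' | ⟨hpy, h'⟩ | ⟨hqy, h'⟩
      · exact Adj.reachable (by exact h')
      · have hxf : x ∈ f' a := hmemx a (hpy ▸ hp)
        refine Reachable.trans (Adj.reachable (v := (⟨x, hxf⟩ : ↥(f' a))) ?_)
          (Adj.reachable (by exact h'))
        exact (hpy ▸ hxy.symm : G.Adj p x)
      · have hxf : x ∈ f' a := hmemx a (hqy ▸ hq)
        refine Reachable.trans (Adj.reachable (v := (⟨x, hxf⟩ : ↥(f' a))) ?_) ?_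
        · exact (h'.symm : G.Adj p x)
        · exact Adj.reachable (hqy ▸ hxy : G.Adj x q)
    have hanchor : ∀ z : ↥(f' a), ∃ z' : ↥(f' a), z'.1 ∈ f a ∧ (G.induce (f' a)).Reachable z z' := by
      rintro ⟨z, hz⟩
      rcases hmem' a z hz with hz' | ⟨rfl, hy⟩
      · exact ⟨⟨z, hz⟩, hz', Reachable.refl _⟩
      · exact ⟨⟨y, hsub a hy⟩, hy, Adj.reachable (by exact hxy)⟩
    obtain ⟨w₀, hw₀⟩ := h1 a
    haveI : Nonempty ↥(f' a) := ⟨⟨w₀, hsub a hw₀⟩⟩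
    refine ⟨fun u v => ?_⟩
    obtain ⟨u', hu', hru⟩ := hanchor u
    obtain ⟨v', hv', hrv⟩ := hanchor v
    have := reach_induce_induce (G1 := Gc) (G2 := G) (hsub a) key
      (u := ⟨u'.1, hu'⟩) (w := ⟨v'.1, hv'⟩) ((h2 a).preconnected _ _)
    exact (hru.trans (by exact this)).trans hrv.symm
  · -- disjointness
    intro a b hab
    rw [Set.disjoint_left]
    rintro z hza hzb
    rcases hmem' a z hza with hz | ⟨hzx, hy⟩
    · rcases hmem' b z hzb with hz' | ⟨hzx', hy'⟩
      · exact (h3 hab).le_bot ⟨hz, hz'⟩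
      · exact hxnot a (hzx' ▸ hz)
    · rcases hmem' b z hzb with hz' | ⟨hzx', hy'⟩
      · exact hxnot b (hzx ▸ hz')
      · exact (h3 hab).le_bot ⟨hy, hy'⟩
  · -- adjacency
    intro a b hab
    obtain ⟨u, hu, v, hv, huv⟩ := h4 a b hab
    rcases huv.2.2.2 with h' | ⟨huy, h'⟩ | ⟨hvy, h'⟩
    · exact ⟨u, hsub a hu, v, hsub b hv, h'⟩
    · exact ⟨x, hmemx a (huy ▸ hu), v, hsub b hv, h'⟩
    · exact ⟨u, hsub a hu, x, hmemx b (hvy ▸ hv), h'.symm⟩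

/-- instance-free edge count -/
noncomputable def ecard (G : SimpleGraph V) : ℕ := G.edgeSet.ncard

lemma ecard_eq (G : SimpleGraph V) [Fintype G.edgeSet] : ecard G = G.edgeFinset.card :=
  Set.ncard_eq_toFinset_card' _

lemma ncard_neighborSet_eq_degree [Fintype V] (G : SimpleGraph V) [DecidableRel G.Adj] (v : V) :
    (G.neighborSet v).ncard = G.degree v := by
  rw [← SimpleGraph.card_neighborFinset_eq_degree]
  exact Set.ncard_eq_toFinset_card' _

section Counting

open Finset
open scoped Classical

variable [Fintype V]

lemma edge_le_restrict_add_degree (G : SimpleGraph V) (t : Set V) (v : V)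
    (h : ∀ p q, G.Adj p q → p ≠ v → q ≠ v → (p ∈ t ∧ q ∈ t)) :
    ecard G ≤ ecard (restrict G t) + (G.neighborSet v).ncard := by
  rw [ecard_eq, ecard_eq, ncard_neighborSet_eq_degree]
  have hsub : G.edgeFinset ⊆ (restrict G t).edgeFinset ∪ G.incidenceFinset v := by
    intro e
    induction e with
    | _ p q =>
      intro he
      rw [mem_edgeFinset, mem_edgeSet] at he
      by_cases hp : p = v
      · exact mem_union_right _ (by rw [mem_incidenceFinset]; exact ⟨he, by simp [hp]⟩)
      by_cases hq : q = v
      · exact mem_union_right _ (by rw [mem_incidenceFinset]; exact ⟨he, by simp [hq]⟩)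
      · obtain ⟨hpt, hqt⟩ := h p q he hp hq
        exact mem_union_left _ (by rw [mem_edgeFinset, mem_edgeSet]; exact ⟨he, hpt, hqt⟩)
  calc #G.edgeFinset ≤ #((restrict G t).edgeFinset ∪ G.incidenceFinset v) := card_le_card hsub
    _ ≤ #(restrict G t).edgeFinset + #(G.incidenceFinset v) := card_union_le _ _
    _ = _ := by rw [card_incidenceFinset_eq_degree]

lemma sum_degree_support (G : SimpleGraph V) (s : Finset V)
    (hs : ∀ p q, G.Adj p q → p ∈ s) :
    ∑ v ∈ s, (G.neighborSet v).ncard = 2 * ecard G := by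
  rw [ecard_eq]
  have : ∀ v, (G.neighborSet v).ncard = G.degree v := fun v => ncard_neighborSet_eq_degree G v
  simp_rw [this]
  rw [← sum_degrees_eq_twice_card_edges]
  apply Finset.sum_subset (subset_univ s)
  intro v _ hv
  rw [← card_neighborFinset_eq_degree, card_eq_zero, eq_empty_iff_forall_notMem]
  intro w hw
  rw [mem_neighborFinset] at hw
  exact hv (hs v w hw)

lemma card_edge_le_choose : ∀ (n : ℕ) (s : Finset V) (G : SimpleGraph V), #s = n →
    (∀ p q, G.Adj p q → p ∈ s) → ecard G ≤ n.choose 2 := by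
  intro n
  induction n with
  | zero =>
    intro s G hcard hsupp
    rw [card_eq_zero] at hcard
    subst hcard
    rw [ecard_eq]
    simp only [Nat.choose_zero_succ, Nat.le_zero, card_eq_zero, eq_empty_iff_forall_notMem]
    intro e
    induction e with
    | _ p q =>
      intro he
      rw [mem_edgeFinset, mem_edgeSet] at he
      exact absurd (hsupp p q he) (notMem_empty p)
  | succ n ih =>
    intro s G hcard hsupp
    obtain ⟨v, hv⟩ := card_pos.mp (by rw [hcard]; omega)
    have h1 : ecard G ≤ ecard (restrict G ↑(s.erase v)) + (G.neighborSet v).ncard := by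
      apply edge_le_restrict_add_degree
      intro p q hpq hp hq
      exact ⟨by simp [Finset.mem_coe, mem_erase, hp, hsupp p q hpq],
        by simp [Finset.mem_coe, mem_erase, hq, hsupp q p hpq.symm]⟩
    have h2 : ecard (restrict G ↑(s.erase v)) ≤ n.choose 2 := by
      apply ih (s.erase v)
      · rw [card_erase_of_mem hv, hcard]; omega
      · intro p q hpq
        exact hpq.2.1
    have h3 : (G.neighborSet v).ncard ≤ n := by
      rw [ncard_neighborSet_eq_degree, ← card_neighborFinset_eq_degree]
      have : G.neighborFinset v ⊆ s.erase v := by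
        intro w hw
        rw [mem_neighborFinset] at hw
        exact mem_erase.mpr ⟨hw.ne', hsupp w v hw.symm⟩
      calc #(G.neighborFinset v) ≤ #(s.erase v) := card_le_card this
        _ = n := by rw [card_erase_of_mem hv, hcard]; omega
    have heq : (n+1).choose 2 = n + n.choose 2 := by
      rw [Nat.choose_succ_succ, Nat.choose_one_right]
    rw [heq]
    exact le_trans h1 (by rw [Nat.add_comm]; exact Nat.add_le_add h3 h2)

open Finset in
lemma edge_le_contract (G : SimpleGraph V) {x y : V} (hxy : G.Adj x y) :
    ecard G ≤ ecard (contract G x y) + 1 +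
      (G.neighborSet x ∩ G.neighborSet y).ncard := by
  rw [ecard_eq, ecard_eq]
  have hnc : (G.neighborSet x ∩ G.neighborSet y).ncard
      = #(G.neighborFinset x ∩ G.neighborFinset y) := by
    rw [Set.ncard_eq_toFinset_card']
    congr 1
    ext z
    simp [SimpleGraph.neighborFinset_def]
  rw [hnc]
  set Gc := contract G x y with hGc
  set A1 := G.edgeFinset.filter (fun e => x ∉ e) with hA1
  set B := G.neighborFinset x \ insert y (G.neighborFinset y) with hB
  set A2 := B.image (fun z => s(y, z)) with hA2
  have h1 : A1 ⊆ Gc.edgeFinset := by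
    intro e
    induction e with
    | _ p q =>
      intro he
      rw [hA1, mem_filter, mem_edgeFinset, mem_edgeSet] at he
      obtain ⟨hadj, hx⟩ := he
      rw [Sym2.mem_iff] at hx
      push_neg at hx
      rw [mem_edgeFinset, mem_edgeSet]
      exact ⟨hadj.ne, fun h => hx.1 h.symm, fun h => hx.2 h.symm, Or.inl hadj⟩
  have h2 : A2 ⊆ Gc.edgeFinset := by
    intro e he
    rw [hA2, mem_image] at he
    obtain ⟨z, hz, rfl⟩ := he
    rw [hB, mem_sdiff, mem_neighborFinset, mem_insert] at hz
    push_neg at hz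
    obtain ⟨hxz, hzy, hzny⟩ := hz
    rw [mem_neighborFinset] at hzny
    rw [mem_edgeFinset, mem_edgeSet]
    exact ⟨fun h => hzy h.symm, hxy.ne', hxz.ne', Or.inr (Or.inl ⟨rfl, hxz⟩)⟩
  have h3 : Disjoint A1 A2 := by
    rw [Finset.disjoint_left]
    intro e h1m h2m
    rw [hA2, mem_image] at h2m
    obtain ⟨z, hz, rfl⟩ := h2m
    rw [hA1, mem_filter, mem_edgeFinset, mem_edgeSet] at h1m
    rw [hB, mem_sdiff, mem_insert] at hz
    push_neg at hz
    exact (mem_neighborFinset G y z).mpr h1m.1 |> hz.2.2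
  have hcard1 : #A1 + G.degree x = #G.edgeFinset := by
    rw [← card_incidenceFinset_eq_degree, incidenceFinset_eq_filter]
    rw [add_comm]
    exact card_filter_add_card_filter_not (fun e => x ∈ e)
  have hcard2 : #A2 = #B := by
    apply card_image_of_injective
    intro a b h
    exact Sym2.congr_right.mp h
  have hcard3 : #B + #(G.neighborFinset x ∩ insert y (G.neighborFinset y)) = G.degree x := by
    rw [hB, ← card_neighborFinset_eq_degree]
    exact card_sdiff_add_card_inter _ _
  have hcard4 : #(G.neighborFinset x ∩ insert y (G.neighborFinset y)) ≤
      1 + #(G.neighborFinset x ∩ G.neighborFinset y) := by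
    have hsub : G.neighborFinset x ∩ insert y (G.neighborFinset y) ⊆
        insert y (G.neighborFinset x ∩ G.neighborFinset y) := by
      intro z hzm
      rw [mem_inter, mem_insert] at hzm
      rcases hzm.2 with rfl | hzin
      · exact mem_insert_self _ _
      · exact mem_insert_of_mem (mem_inter.mpr ⟨hzm.1, hzin⟩)
    calc _ ≤ #(insert y (G.neighborFinset x ∩ G.neighborFinset y)) := card_le_card hsub
      _ ≤ _ := by rw [add_comm]; exact card_insert_le _ _
  have hunion : #A1 + #A2 ≤ #Gc.edgeFinset := by
    rw [← card_union_of_disjoint h3]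
    exact card_le_card (union_subset h1 h2)
  omega

lemma ncard_inter_neighborSet (G : SimpleGraph V) (x y : V) :
    (G.neighborSet x ∩ G.neighborSet y).ncard = #(G.neighborFinset x ∩ G.neighborFinset y) := by
  rw [Set.ncard_eq_toFinset_card']
  congr 1
  ext z
  simp [SimpleGraph.neighborFinset_def]

end Counting

open Finset in
open scoped Classical in
theorem main_bound [Fintype V] : ∀ (n : ℕ) (s : Finset V) (G : SimpleGraph V), #s = n →
    (∀ p q, G.Adj p q → p ∈ s) →
    ¬ IsMinor (completeBipartiteGraph (Fin 3) (Fin 3)) G →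
    3 ≤ #s → ecard G ≤ 3 * #s - 5 := by
  intro n
  induction n using Nat.strong_induction_on with
  | _ n ih =>
  intro s G hcard hsupp hK33 hs3
  subst hcard
  by_contra hcon
  push_neg at hcon
  have he : 3 * #s - 4 ≤ ecard G := by omega
  rw [ecard_eq] at he
  -- trim the graph to exactly 3m-4 edges
  obtain ⟨F, hFsub, hFcard⟩ := Finset.exists_subset_card_eq he
  set G' := SimpleGraph.fromEdgeSet (↑F : Set (Sym2 V)) with hG'
  have hle : G' ≤ G := by
    intro u v huv
    rw [hG', SimpleGraph.fromEdgeSet_adj] at huv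
    have := hFsub huv.1
    rwa [SimpleGraph.mem_edgeFinset, SimpleGraph.mem_edgeSet] at this
  have hE' : ecard G' = #F := by
    have h1 : G'.edgeSet = ↑F := by
      rw [hG', SimpleGraph.edgeSet_fromEdgeSet]
      ext e
      simp only [Set.mem_diff, Finset.mem_coe, Set.mem_setOf_eq, and_iff_left_iff_imp]
      intro heF hdiag
      have := hFsub heF
      rw [SimpleGraph.mem_edgeFinset] at this
      exact G.not_isDiag_of_mem_edgeSet this hdiag
    rw [ecard, h1, Set.ncard_coe_finset]
  have he' : ecard G' = 3 * #s - 4 := by rw [hE', hFcard]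
  have hsupp' : ∀ p q, G'.Adj p q → p ∈ s := fun p q h => hsupp p q (hle h)
  have hK33' : ¬ IsMinor (completeBipartiteGraph (Fin 3) (Fin 3)) G' :=
    fun h => hK33 (isMinor_mono hle h)
  -- small cases
  have hm6 : 6 ≤ #s := by
    by_contra hlt
    have hchoose := card_edge_le_choose (#s) s G' rfl hsupp'
    rw [he'] at hchoose
    rcases (by omega : #s = 3 ∨ #s = 4 ∨ #s = 5) with h|h|h <;>
      rw [h] at hchoose <;> norm_num [Nat.choose] at hchoose
  -- minimum degree at least 4
  have hdeg4 : ∀ v ∈ s, 4 ≤ G'.degree v := by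
    by_contra hcon4
    push_neg at hcon4
    obtain ⟨v, hvs, hvdeg⟩ := hcon4
    have hstep : ecard G' ≤ ecard (restrict G' (↑(s.erase v) : Set V)) + (G'.neighborSet v).ncard :=
      edge_le_restrict_add_degree G' _ v (fun p q hpq hp hq =>
        ⟨by simp [Finset.mem_coe, Finset.mem_erase, hp, hsupp' p q hpq],
         by simp [Finset.mem_coe, Finset.mem_erase, hq, hsupp' q p hpq.symm]⟩)
    have hd : (G'.neighborSet v).ncard ≤ 3 := by
      rw [ncard_neighborSet_eq_degree]; omega
    have hih : ecard (restrict G' (↑(s.erase v) : Set V)) ≤ 3 * #(s.erase v) - 5 := by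
      refine ih (#(s.erase v)) (by rw [Finset.card_erase_of_mem hvs]; omega) _ _ rfl
        (fun p q hpq => hpq.2.1)
        (fun h => hK33' (isMinor_mono (restrict_le _ _) h)) ?_
      rw [Finset.card_erase_of_mem hvs]; omega
    rw [Finset.card_erase_of_mem hvs] at hih
    omega
  -- every edge has at least 3 common neighbours
  have hcommon : ∀ u v, G'.Adj u v → 3 ≤ (G'.neighborSet u ∩ G'.neighborSet v).ncard := by
    intro u v huv
    by_contra hc
    push_neg at hc
    have hstep := edge_le_contract G' huv
    have hK33c : ¬ IsMinor (completeBipartiteGraph (Fin 3) (Fin 3)) (contract G' u v) :=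
      fun h => hK33' (contract_isMinor huv h)
    have hus : u ∈ s := hsupp' u v huv
    have hsuppc : ∀ p q, (contract G' u v).Adj p q → p ∈ s.erase u := by
      intro p q hpq
      obtain ⟨hne, hpu, hqu, hcase⟩ := hpq
      rw [Finset.mem_erase]
      refine ⟨hpu, ?_⟩
      rcases hcase with h | ⟨hp, h⟩ | ⟨hq, h⟩
      · exact hsupp' p q h
      · rw [hp]; exact hsupp' v u huv.symm
      · exact hsupp' p u h.symm
    have hih : ecard (contract G' u v) ≤ 3 * #(s.erase u) - 5 := by
      refine ih (#(s.erase u)) (by rw [Finset.card_erase_of_mem hus]; omega) _ _ rfl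
        hsuppc hK33c ?_
      rw [Finset.card_erase_of_mem hus]; omega
    rw [Finset.card_erase_of_mem hus] at hih
    omega
  -- a vertex of degree 4 or 5
  have hxex : ∃ x ∈ s, G'.degree x ≤ 5 := by
    by_contra hc
    push_neg at hc
    have hsum := sum_degree_support G' s hsupp'
    have hs6 : ∀ v ∈ s, 6 ≤ (G'.neighborSet v).ncard := fun v hv => by
      rw [ncard_neighborSet_eq_degree]; exact hc v hv
    have h6 : 6 * #s ≤ ∑ v ∈ s, (G'.neighborSet v).ncard := by
      calc 6 * #s = ∑ _v ∈ s, 6 := by rw [Finset.sum_const, smul_eq_mul, mul_comm]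
        _ ≤ _ := Finset.sum_le_sum hs6
    omega
  obtain ⟨x, hxs, hxdeg5⟩ := hxex
  have hxdeg4 : 4 ≤ G'.degree x := hdeg4 x hxs
  set Nx := G'.neighborFinset x with hNxdef
  have hNxcard : #Nx = G'.degree x := G'.card_neighborFinset_eq_degree x
  have hadjx : ∀ y ∈ Nx, G'.Adj x y := by
    intro y hy
    rw [hNxdef, SimpleGraph.mem_neighborFinset] at hy
    exact hy
  have hNxs : ∀ y ∈ Nx, y ∈ s := fun y hy => hsupp' y x (hadjx y hy).symm
  have hxNx : x ∉ Nx := fun h => G'.irrefl (hadjx x h)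
  have hinter : ∀ y ∈ Nx, 3 ≤ #(Nx ∩ G'.neighborFinset y) ∧
      (Nx ∩ G'.neighborFinset y) ⊆ Nx.erase y := by
    intro y hy
    constructor
    · have h3 := hcommon x y (hadjx y hy)
      rw [ncard_inter_neighborSet] at h3; convert h3
    · intro k hk
      rw [Finset.mem_inter] at hk
      rw [Finset.mem_erase]
      exact ⟨fun h => G'.irrefl (h ▸ (SimpleGraph.mem_neighborFinset _ _ _).mp hk.2), hk.1⟩
  rcases (by omega : G'.degree x = 4 ∨ G'.degree x = 5) with hdx | hdx
  · -- degree 4 : N(x) ∪ {x} is a 5-clique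
    have hclique : ∀ y ∈ Nx, ∀ z ∈ Nx, z ≠ y → G'.Adj y z := by
      intro y hy z hz hzy
      obtain ⟨h3, hsub⟩ := hinter y hy
      have heq : Nx ∩ G'.neighborFinset y = Nx.erase y := by
        apply Finset.eq_of_subset_of_card_le hsub
        rw [Finset.card_erase_of_mem hy, hNxcard, hdx]
        omega
      have hzmem : z ∈ Nx ∩ G'.neighborFinset y := by
        rw [heq, Finset.mem_erase]; exact ⟨hzy, hz⟩
      rw [Finset.mem_inter] at hzmem
      exact (SimpleGraph.mem_neighborFinset _ _ _).mp hzmem.2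
    set K := insert x Nx with hKdef
    have hKcard : #K = 5 := by
      rw [hKdef, Finset.card_insert_of_notMem hxNx, hNxcard, hdx]
    have hKs : ∀ k ∈ K, k ∈ s := by
      intro k hk
      rw [hKdef, Finset.mem_insert] at hk
      rcases hk with rfl | hk
      · exact hxs
      · exact hNxs k hk
    set W : Set V := {u | u ∈ s ∧ u ∉ K} with hWdef
    have hWex : ∃ v₀, v₀ ∈ s ∧ v₀ ∉ K := by
      have h1 : #s - #K ≤ #(s \ K) := Finset.le_card_sdiff K s
      obtain ⟨v₀, hv₀⟩ := Finset.card_pos.mp (by omega : 0 < #(s \ K))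
      rw [Finset.mem_sdiff] at hv₀
      exact ⟨v₀, hv₀⟩
    obtain ⟨v₀, hv₀s, hv₀K⟩ := hWex
    set Gout := restrict G' W with hGoutdef
    set C : Set V := {u | Gout.Reachable v₀ u} with hCdef
    have hv₀C : v₀ ∈ C := by rw [hCdef]; exact Set.mem_setOf_eq ▸ Reachable.refl v₀
    have hCW : C ⊆ W := fun u hu =>
      reachable_closure (G1 := Gout) (t := W) (fun p q h _ => h.2.2) hu ⟨hv₀s, hv₀K⟩
    have hCclosed : ∀ u ∈ C, ∀ w, G'.Adj u w → w ∈ W → w ∈ C := by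
      intro u hu w hadj hw
      exact Reachable.trans hu (Adj.reachable ⟨hadj, hCW hu, hw⟩)
    set A := Nx.filter (fun k => ∃ u ∈ C, G'.Adj u k) with hAdef
    have hANx : A ⊆ Nx := Finset.filter_subset _ _
    have hnbr : ∀ u ∈ C, ∀ w, G'.Adj u w → w ∈ C ∨ w ∈ A := by
      intro u hu w hadj
      have hws : w ∈ s := hsupp' w u hadj.symm
      by_cases hwK : w ∈ K
      · rw [hKdef, Finset.mem_insert] at hwK
        rcases hwK with rfl | hwNx
        · exfalso
          exact (hCW hu).2 (by
            rw [hKdef, Finset.mem_insert]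
            exact Or.inr ((SimpleGraph.mem_neighborFinset _ _ _).mpr hadj.symm))
        · exact Or.inr (Finset.mem_filter.mpr ⟨hwNx, u, hu, hadj⟩)
      · exact Or.inl (hCclosed u hu w hadj ⟨hws, hwK⟩)
    have hreachC : ∀ (u : V) (hu : u ∈ C), (G'.induce C).Reachable ⟨v₀, hv₀C⟩ ⟨u, hu⟩ := by
      intro u hu
      obtain ⟨hw, hr⟩ := reach_induce_transfer (G1 := Gout) (G2 := G') (t := C)
        (fun p q hpq hp => ⟨hCclosed p hp q hpq.1 hpq.2.2, hpq.1⟩) hu hv₀C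
      exact hr
    have hconnC : (G'.induce C).Connected := by
      haveI : Nonempty ↥C := ⟨⟨v₀, hv₀C⟩⟩
      exact ⟨fun a b => ((hreachC a.1 a.2).symm.trans (hreachC b.1 b.2))⟩
    have hCK : ∀ u ∈ C, u ∉ K := fun u hu => (hCW hu).2
    by_cases hA3 : 3 ≤ #A
    · -- a component attached to three corners : K33 minor
      obtain ⟨A3, hA3sub, hA3card⟩ := Finset.exists_subset_card_eq hA3
      obtain ⟨a1, a2, a3, h12, h13, h23, hA3eq⟩ := Finset.card_eq_three.mp hA3card
      have hdd : (Nx \ A3).Nonempty := by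
        apply Finset.card_pos.mp
        have h1 : #Nx - #A3 ≤ #(Nx \ A3) := Finset.le_card_sdiff A3 Nx
        rw [hA3card, hNxcard, hdx] at h1
        omega
      obtain ⟨dd, hddmem⟩ := hdd
      rw [Finset.mem_sdiff] at hddmem
      obtain ⟨hddNx, hddA3⟩ := hddmem
      have haiA : ∀ a ∈ ({a1, a2, a3} : Finset V), a ∈ A := fun a ha => hA3sub (hA3eq ▸ ha)
      have ha1A : a1 ∈ A := haiA a1 (by simp)
      have ha2A : a2 ∈ A := haiA a2 (by simp)
      have ha3A : a3 ∈ A := haiA a3 (by simp)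
      have hCadj : ∀ a ∈ A, ∃ u ∈ C, ∃ v ∈ ({a} : Set V), G'.Adj u v := by
        intro a ha
        obtain ⟨-, u, hu, hadj⟩ := Finset.mem_filter.mp ha
        exact ⟨u, hu, a, rfl, hadj⟩
      have hadjdd : ∀ a ∈ ({a1, a2, a3} : Finset V), G'.Adj dd a := by
        intro a ha
        refine hclique dd hddNx a (hANx (haiA a ha)) ?_
        rintro rfl
        exact hddA3 (hA3eq ▸ ha)
      have ha1Nx : a1 ∈ Nx := hANx ha1A
      have ha2Nx : a2 ∈ Nx := hANx ha2A
      have ha3Nx : a3 ∈ Nx := hANx ha3A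
      have hxC : x ∉ C := fun h => hCK x h (Finset.mem_insert_self x Nx)
      have hddC : dd ∉ C := fun h => hCK dd h (Finset.mem_insert_of_mem hddNx)
      have hnC : ∀ a ∈ Nx, a ∉ C := fun a ha h => hCK a h (Finset.mem_insert_of_mem ha)
      apply hK33'
      refine isMinor_K33_of G' ![{x}, {dd}, C] ![{a1}, {a2}, {a3}] ?_ ?_ ?_ ?_ ?_ ?_ ?_ ?_
      · intro i
        fin_cases i
        · exact ⟨x, rfl⟩
        · exact ⟨dd, rfl⟩
        · exact ⟨v₀, hv₀C⟩
      · intro j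
        fin_cases j
        · exact ⟨a1, rfl⟩
        · exact ⟨a2, rfl⟩
        · exact ⟨a3, rfl⟩
      · intro i
        fin_cases i
        · exact singleton_connected G' x
        · exact singleton_connected G' dd
        · exact hconnC
      · intro j
        fin_cases j
        · exact singleton_connected G' a1
        · exact singleton_connected G' a2
        · exact singleton_connected G' a3
      · intro i j hij
        fin_cases i <;> fin_cases j <;> try exact absurd rfl hij
        · exact Set.disjoint_singleton.mpr (hadjx dd hddNx).ne
        · exact Set.disjoint_singleton_left.mpr hxC
        · exact Set.disjoint_singleton.mpr (hadjx dd hddNx).ne.symm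
        · exact Set.disjoint_singleton_left.mpr hddC
        · exact (Set.disjoint_singleton_left.mpr hxC).symm
        · exact (Set.disjoint_singleton_left.mpr hddC).symm
      · intro i j hij
        fin_cases i <;> fin_cases j <;> try exact absurd rfl hij
        · exact Set.disjoint_singleton.mpr h12
        · exact Set.disjoint_singleton.mpr h13
        · exact Set.disjoint_singleton.mpr h12.symm
        · exact Set.disjoint_singleton.mpr h23
        · exact Set.disjoint_singleton.mpr h13.symm
        · exact Set.disjoint_singleton.mpr h23.symm
      · intro i j
        fin_cases i <;> fin_cases j
        · exact Set.disjoint_singleton.mpr (hadjx a1 ha1Nx).ne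
        · exact Set.disjoint_singleton.mpr (hadjx a2 ha2Nx).ne
        · exact Set.disjoint_singleton.mpr (hadjx a3 ha3Nx).ne
        · exact Set.disjoint_singleton.mpr (hadjdd a1 (by simp)).ne
        · exact Set.disjoint_singleton.mpr (hadjdd a2 (by simp)).ne
        · exact Set.disjoint_singleton.mpr (hadjdd a3 (by simp)).ne
        · exact Set.disjoint_singleton_right.mpr (hnC a1 ha1Nx)
        · exact Set.disjoint_singleton_right.mpr (hnC a2 ha2Nx)
        · exact Set.disjoint_singleton_right.mpr (hnC a3 ha3Nx)
      · intro i j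
        fin_cases i <;> fin_cases j
        · exact ⟨x, rfl, a1, rfl, hadjx a1 ha1Nx⟩
        · exact ⟨x, rfl, a2, rfl, hadjx a2 ha2Nx⟩
        · exact ⟨x, rfl, a3, rfl, hadjx a3 ha3Nx⟩
        · exact ⟨dd, rfl, a1, rfl, hadjdd a1 (by simp)⟩
        · exact ⟨dd, rfl, a2, rfl, hadjdd a2 (by simp)⟩
        · exact ⟨dd, rfl, a3, rfl, hadjdd a3 (by simp)⟩
        · exact hCadj a1 ha1A
        · exact hCadj a2 ha2A
        · exact hCadj a3 ha3A
    · -- all attachment sets small : split off the component C and count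
      push_neg at hA3
      set Cf := C.toFinset with hCfdef
      have hCfC : ∀ u, u ∈ Cf ↔ u ∈ C := fun u => Set.mem_toFinset
      set s1 := Cf ∪ A with hs1def
      set s2 := s \ Cf with hs2def
      set G1 := restrict G' (↑s1 : Set V) with hG1def
      set G2 := restrict G' (↑s2 : Set V) with hG2def
      have hCfs : Cf ⊆ s := fun u hu => ((hCW ((hCfC u).mp hu)).1)
      have hCfK : ∀ u ∈ Cf, u ∉ K := fun u hu => hCK u ((hCfC u).mp hu)
      have hs1s : s1 ⊆ s := Finset.union_subset hCfs (fun a ha => hNxs a (hANx ha))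
      have hxs1 : x ∉ s1 := by
        rw [hs1def, Finset.mem_union]
        rintro (h | h)
        · exact hCfK x h (Finset.mem_insert_self x Nx)
        · exact hxNx (hANx h)
      have hsplit : G'.edgeFinset ⊆ G1.edgeFinset ∪ G2.edgeFinset := by
        intro e
        induction e with
        | _ p q =>
          intro hee
          rw [SimpleGraph.mem_edgeFinset, SimpleGraph.mem_edgeSet] at hee
          have hmem : ∀ a b, G'.Adj a b → a ∈ C → s(a,b) ∈ G1.edgeFinset := by
            intro a b hab haC
            rw [SimpleGraph.mem_edgeFinset, SimpleGraph.mem_edgeSet]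
            have hbs1 : b ∈ (↑s1 : Set V) := by
              rcases hnbr a haC b hab with h | h
              · exact Finset.mem_coe.mpr (Finset.mem_union_left _ ((hCfC b).mpr h))
              · exact Finset.mem_coe.mpr (Finset.mem_union_right _ h)
            exact ⟨hab, Finset.mem_coe.mpr (Finset.mem_union_left _ ((hCfC a).mpr haC)), hbs1⟩
          by_cases hpC : p ∈ C
          · exact Finset.mem_union_left _ (hmem p q hee hpC)
          by_cases hqC : q ∈ C
          · have hsw := hmem q p hee.symm hqC
            rw [Sym2.eq_swap] at hsw
            exact Finset.mem_union_left _ hsw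
          · apply Finset.mem_union_right
            rw [SimpleGraph.mem_edgeFinset, SimpleGraph.mem_edgeSet]
            refine ⟨hee, ?_, ?_⟩
            · exact Finset.mem_coe.mpr (Finset.mem_sdiff.mpr
                ⟨hsupp' p q hee, fun h => hpC ((hCfC p).mp h)⟩)
            · exact Finset.mem_coe.mpr (Finset.mem_sdiff.mpr
                ⟨hsupp' q p hee.symm, fun h => hqC ((hCfC q).mp h)⟩)
      have hcard_union := Finset.card_union_add_card_inter G1.edgeFinset G2.edgeFinset
      have hcard_le : #G'.edgeFinset ≤ #(G1.edgeFinset ∪ G2.edgeFinset) :=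
        Finset.card_le_card hsplit
      have hv₀Cf : v₀ ∈ Cf := (hCfC v₀).mpr hv₀C
      have hs1card5 : 5 ≤ #s1 := by
        have hsub : insert v₀ (G'.neighborFinset v₀) ⊆ s1 := by
          intro w hw
          rw [Finset.mem_insert] at hw
          rcases hw with rfl | hw
          · exact Finset.mem_union_left _ hv₀Cf
          · have hadj : G'.Adj v₀ w := (SimpleGraph.mem_neighborFinset _ _ _).mp hw
            rcases hnbr v₀ hv₀C w hadj with h | h
            · exact Finset.mem_union_left _ ((hCfC w).mpr h)
            · exact Finset.mem_union_right _ h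
        have h1 : #(insert v₀ (G'.neighborFinset v₀)) = G'.degree v₀ + 1 := by
          rw [Finset.card_insert_of_notMem
            (fun h => G'.irrefl ((SimpleGraph.mem_neighborFinset _ _ _).mp h)),
            SimpleGraph.card_neighborFinset_eq_degree]
        have h2 := Finset.card_le_card hsub
        have hd := hdeg4 v₀ hv₀s
        omega
      have hs1lt : #s1 < #s := by
        have hsub : s1 ⊆ s.erase x :=
          fun a ha => Finset.mem_erase.mpr ⟨fun h => hxs1 (h ▸ ha), hs1s ha⟩
        have h2 := Finset.card_le_card hsub
        rw [Finset.card_erase_of_mem hxs] at h2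
        omega
      have hKs2 : K ⊆ s2 := fun k hk => Finset.mem_sdiff.mpr ⟨hKs k hk, fun h => hCfK k h hk⟩
      have hs2card5 : 5 ≤ #s2 := hKcard ▸ Finset.card_le_card hKs2
      have h2card : #s2 = #s - #Cf := by rw [hs2def, Finset.card_sdiff_of_subset hCfs]
      have hs2lt : #s2 < #s := by
        have h2 : 1 ≤ #Cf := Finset.card_pos.mpr ⟨v₀, hv₀Cf⟩
        have h3 := Finset.card_le_card hCfs
        omega
      have hCfcard : #s1 = #Cf + #A := by
        rw [hs1def, Finset.card_union_of_disjoint]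
        rw [Finset.disjoint_left]
        intro u hu huA
        exact hCfK u hu (Finset.mem_insert_of_mem (hANx huA))
      have he1 : ecard G1 ≤ 3 * #s1 - 5 :=
        ih (#s1) hs1lt s1 G1 rfl (fun p q hpq => Finset.mem_coe.mp hpq.2.1)
          (fun h => hK33' (isMinor_mono (restrict_le _ _) h)) (by omega)
      have he2 : ecard G2 ≤ 3 * #s2 - 5 :=
        ih (#s2) hs2lt s2 G2 rfl (fun p q hpq => Finset.mem_coe.mp hpq.2.1)
          (fun h => hK33' (isMinor_mono (restrict_le _ _) h)) (by omega)
      rw [ecard_eq] at he1 he2 he'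
      have hCfle : #Cf ≤ #s := Finset.card_le_card hCfs
      rcases (by omega : #A ≤ 1 ∨ #A = 2) with hA | hA
      · omega
      · obtain ⟨p, q, hpq, hAeq⟩ := Finset.card_eq_two.mp hA
        have hpNx : p ∈ Nx := hANx (by rw [hAeq]; simp)
        have hqNx : q ∈ Nx := hANx (by rw [hAeq]; simp)
        have hadjpq : G'.Adj p q := hclique p hpNx q hqNx (fun h => hpq h.symm)
        have hshared : s(p,q) ∈ G1.edgeFinset ∩ G2.edgeFinset := by
          rw [Finset.mem_inter, SimpleGraph.mem_edgeFinset, SimpleGraph.mem_edgeSet,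
            SimpleGraph.mem_edgeFinset, SimpleGraph.mem_edgeSet]
          refine ⟨⟨hadjpq, ?_, ?_⟩, hadjpq, ?_, ?_⟩
          · exact Finset.mem_coe.mpr (Finset.mem_union_right _ (by rw [hAeq]; simp))
          · exact Finset.mem_coe.mpr (Finset.mem_union_right _ (by rw [hAeq]; simp))
          · exact Finset.mem_coe.mpr (Finset.mem_sdiff.mpr
              ⟨hNxs p hpNx, fun h => hCfK p h (Finset.mem_insert_of_mem hpNx)⟩)
          · exact Finset.mem_coe.mpr (Finset.mem_sdiff.mpr
              ⟨hNxs q hqNx, fun h => hCfK q h (Finset.mem_insert_of_mem hqNx)⟩)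
        have hone : 1 ≤ #(G1.edgeFinset ∩ G2.edgeFinset) := Finset.card_pos.mpr ⟨_, hshared⟩
        omega
  · -- degree 5
    have h5 : #Nx = 5 := by rw [hNxcard, hdx]
    have hbc : ∃ b ∈ Nx, ∃ c ∈ Nx, b ≠ c ∧
        (∀ z ∈ Nx, z ≠ b → z ≠ c → G'.Adj b z ∧ G'.Adj c z) := by
      have hkey : ∀ y ∈ Nx, ∀ z ∈ Nx, z ≠ y → ¬ G'.Adj y z →
          ∀ w ∈ Nx, w ≠ y → w ≠ z → G'.Adj y w := by
        intro y hy z hz hzy hnadj w hw hwy hwz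
        obtain ⟨h3, hsub⟩ := hinter y hy
        have hsub2 : Nx ∩ G'.neighborFinset y ⊆ (Nx.erase y).erase z := by
          intro k hk
          rw [Finset.mem_erase]
          refine ⟨?_, hsub hk⟩
          rintro rfl
          rw [Finset.mem_inter] at hk
          exact hnadj ((SimpleGraph.mem_neighborFinset _ _ _).mp hk.2)
        have heq : Nx ∩ G'.neighborFinset y = (Nx.erase y).erase z := by
          apply Finset.eq_of_subset_of_card_le hsub2
          rw [Finset.card_erase_of_mem (Finset.mem_erase.mpr ⟨hzy, hz⟩),
            Finset.card_erase_of_mem hy, h5]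
          omega
        have hwmem : w ∈ Nx ∩ G'.neighborFinset y := by
          rw [heq]
          exact Finset.mem_erase.mpr ⟨hwz, Finset.mem_erase.mpr ⟨hwy, hw⟩⟩
        rw [Finset.mem_inter] at hwmem
        exact (SimpleGraph.mem_neighborFinset _ _ _).mp hwmem.2
      by_cases hex : ∃ b ∈ Nx, ∃ c ∈ Nx, b ≠ c ∧ ¬ G'.Adj b c
      · obtain ⟨b, hbm, c, hcm, hne, hnadj⟩ := hex
        refine ⟨b, hbm, c, hcm, hne, fun z hz hzb hzc => ⟨?_, ?_⟩⟩
        · exact hkey b hbm c hcm (fun h => hne h.symm) hnadj z hz hzb hzc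
        · exact hkey c hcm b hbm hne (fun h => hnadj h.symm) z hz hzc hzb
      · push_neg at hex
        obtain ⟨b, hbm, c, hcm, hne⟩ := Finset.one_lt_card.mp (by omega : 1 < #Nx)
        exact ⟨b, hbm, c, hcm, hne, fun z hz hzb hzc =>
          ⟨hex b hbm z hz (Ne.symm hzb), hex c hcm z hz (Ne.symm hzc)⟩⟩
    obtain ⟨b, hb, c, hc, hbcne, hbcadj⟩ := hbc
    have hbcsub : ({b, c} : Finset V) ⊆ Nx := by
      intro z hz
      rw [Finset.mem_insert, Finset.mem_singleton] at hz
      rcases hz with rfl | rfl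
      exacts [hb, hc]
    have hA3card : #(Nx \ ({b, c} : Finset V)) = 3 := by
      rw [Finset.card_sdiff_of_subset hbcsub, h5,
        Finset.card_insert_of_notMem (by simp [hbcne]), Finset.card_singleton]
    obtain ⟨a1, a2, a3, h12, h13, h23, hAeq⟩ := Finset.card_eq_three.mp hA3card
    have hmem : ∀ a ∈ ({a1, a2, a3} : Finset V), a ∈ Nx ∧ a ≠ b ∧ a ≠ c := by
      intro a ha
      have hm : a ∈ Nx \ ({b, c} : Finset V) := hAeq ▸ ha
      rw [Finset.mem_sdiff, Finset.mem_insert, Finset.mem_singleton] at hm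
      push_neg at hm
      exact ⟨hm.1, hm.2.1, hm.2.2⟩
    have hm1 := hmem a1 (by simp)
    have hm2 := hmem a2 (by simp)
    have hm3 := hmem a3 (by simp)
    apply hK33'
    refine isMinor_K33_of_adj G' ![x, b, c] ![a1, a2, a3] ?_ ?_ ?_
    · intro i j hij
      fin_cases i <;> fin_cases j <;> try exact absurd rfl hij
      · exact (hadjx b hb).ne
      · exact (hadjx c hc).ne
      · exact (hadjx b hb).ne'
      · exact hbcne
      · exact (hadjx c hc).ne'
      · exact hbcne.symm
    · intro i j hij
      fin_cases i <;> fin_cases j <;> try exact absurd rfl hij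
      · exact h12
      · exact h13
      · exact h12.symm
      · exact h23
      · exact h13.symm
      · exact h23.symm
    · intro i j
      fin_cases i <;> fin_cases j
      · exact hadjx a1 hm1.1
      · exact hadjx a2 hm2.1
      · exact hadjx a3 hm3.1
      · exact (hbcadj a1 hm1.1 hm1.2.1 hm1.2.2).1
      · exact (hbcadj a2 hm2.1 hm2.2.1 hm2.2.2).1
      · exact (hbcadj a3 hm3.1 hm3.2.1 hm3.2.2).1
      · exact (hbcadj a1 hm1.1 hm1.2.1 hm1.2.2).2
      · exact (hbcadj a2 hm2.1 hm2.2.1 hm2.2.2).2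
      · exact (hbcadj a3 hm3.1 hm3.2.1 hm3.2.2).2

end Wagner

/-- Every `K₃,₃`-minor-free graph `G` with at least 3 vertices has at most
`3|V(G)| − 5` edges. -/
theorem stmt16 {V : Type*} [Fintype V] (G : SimpleGraph V)
    (hK33 : ¬ IsMinor (completeBipartiteGraph (Fin 3) (Fin 3)) G)
    (hn : 3 ≤ Fintype.card V) :
    Nat.card G.edgeSet ≤ 3 * Fintype.card V - 5 := by
  have h := Wagner.main_bound (Fintype.card V) Finset.univ G (by rw [Finset.card_univ])
    (fun p q _ => Finset.mem_univ p) hK33 (by rw [Finset.card_univ]; exact hn)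
  rw [Finset.card_univ] at h
  rw [Nat.card_coe_set_eq]
  exact h
end
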